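/- arXiv:2505.03984 — 2 statements merged into one kernel-verified Lean document; each statement's English description precedes it below -/
import Mathlib

section
/- Let F be three times differentiable on an open interval J with F > 0 and F' ≠ 0 on J, and let h = √F. Then on J, 3·(h'')² - h'·h''' = ((F')⁴ / (8·F²)) · (F/(F')²)'', where (F/(F')²)'' denotes the second derivative of the function u ↦ F(u)/(F'(u))². -/
/-!
Since `F = h²`, we have `F' = 2 h h'` and hence `F / F'² = 1 / (4 h'²)`. The second derivative of
`(h'²)⁻¹` is `2 (3 h''² - h' h''') / h'⁴`, while `F'⁴ / (8 F²) = 2 h'⁴`.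
-/

open Filter Topology

theorem deriv_eq_two_mul_deriv_of_eqOn_sq {F h : ℝ → ℝ} {s : Set ℝ} (hs : IsOpen s)
    (hF : ∀ v ∈ s, F v = h v ^ 2) {u : ℝ} (hu : u ∈ s) (hh : DifferentiableAt ℝ h u) :
    deriv F u = 2 * h u * deriv h u := by
  rw [(eventuallyEq_of_mem (hs.mem_nhds hu) hF).deriv_eq, (hh.hasDerivAt.fun_pow 2).deriv]
  ring

theorem deriv_deriv_div_const (f : ℝ → ℝ) (c u : ℝ) :
    deriv (deriv fun v => f v / c) u = deriv (deriv f) u / c := by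
  have : deriv (fun v => f v / c) = fun v => deriv f v / c := funext fun v => deriv_div_const c
  rw [this, deriv_div_const]

theorem deriv_deriv_inv_sq {k : ℝ → ℝ} {s : Set ℝ} (hs : IsOpen s) (hk : ContDiffOn ℝ 2 k s)
    {u : ℝ} (hu : u ∈ s) (hku : k u ≠ 0) :
    deriv (deriv fun v => (k v ^ 2)⁻¹) u =
      2 * (3 * deriv k u ^ 2 - k u * deriv (deriv k) u) / k u ^ 4 := by
  have hdk : ∀ v ∈ s, HasDerivAt k (deriv k v) v := fun v hv =>
    ((hk.differentiableOn (by norm_num)).differentiableAt (hs.mem_nhds hv)).hasDerivAt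
  have hddk : HasDerivAt (deriv k) (deriv (deriv k) u) u :=
    (((hk.deriv_of_isOpen hs (by norm_num : (1 : WithTop ℕ∞) + 1 ≤ 2)).differentiableOn
      one_ne_zero).differentiableAt (hs.mem_nhds hu)).hasDerivAt
  have hne : ∀ᶠ v in 𝓝 u, v ∈ s ∧ k v ≠ 0 :=
    (hs.eventually_mem hu).and ((hk.continuousOn.continuousAt (hs.mem_nhds hu)).eventually_ne hku)
  have hderiv : deriv (fun v => (k v ^ 2)⁻¹) =ᶠ[𝓝 u] fun v => -2 * deriv k v / k v ^ 3 := by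
    filter_upwards [hne] with v ⟨hv, hkv⟩
    rw [(((hdk v hv).fun_pow 2).fun_inv (pow_ne_zero 2 hkv)).deriv]
    field_simp
    ring
  rw [hderiv.deriv_eq,
    ((hddk.const_mul (-2)).fun_div ((hdk u hu).fun_pow 3) (pow_ne_zero 3 hku)).deriv]
  field_simp
  ring

theorem stmt_8 (a b : ℝ) (F : ℝ → ℝ)
    (hF : ContDiffOn ℝ 3 F (Set.Ioo a b))
    (hFpos : ∀ u ∈ Set.Ioo a b, 0 < F u)
    (hF' : ∀ u ∈ Set.Ioo a b, deriv F u ≠ 0)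
    (h : ℝ → ℝ) (hh : ∀ u ∈ Set.Ioo a b, h u = Real.sqrt (F u)) :
    ∀ u ∈ Set.Ioo a b,
      3 * (deriv (deriv h) u)^2 - deriv h u * deriv (deriv (deriv h)) u =
        ((deriv F u)^4 / (8 * (F u)^2)) *
          deriv (deriv (fun v => F v / (deriv F v)^2)) u := by
  intro u hu
  have hJ : IsOpen (Set.Ioo a b) := isOpen_Ioo
  have hh_smooth : ContDiffOn ℝ 3 h (Set.Ioo a b) :=
    (hF.sqrt fun v hv => (hFpos v hv).ne').congr hh
  have hh_ne : ∀ v ∈ Set.Ioo a b, h v ≠ 0 := fun v hv => by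
    rw [hh v hv]
    exact (Real.sqrt_pos.2 (hFpos v hv)).ne'
  have hF_eq : ∀ v ∈ Set.Ioo a b, F v = h v ^ 2 := fun v hv => by
    rw [hh v hv, Real.sq_sqrt (hFpos v hv).le]
  have hderivF : ∀ v ∈ Set.Ioo a b, deriv F v = 2 * h v * deriv h v := fun v hv =>
    deriv_eq_two_mul_deriv_of_eqOn_sq hJ hF_eq hv
      ((hh_smooth.differentiableOn (by norm_num)).differentiableAt (hJ.mem_nhds hv))
  have hdh_ne : deriv h u ≠ 0 := fun hzero => hF' u hu (by rw [hderivF u hu, hzero, mul_zero])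
  have hG : (fun v => F v / deriv F v ^ 2) =ᶠ[𝓝 u] fun v => (deriv h v ^ 2)⁻¹ / 4 := by
    filter_upwards [hJ.mem_nhds hu] with v hv
    have := hh_ne v hv
    rw [hF_eq v hv, hderivF v hv]
    field_simp
    ring
  rw [hG.deriv.deriv_eq, deriv_deriv_div_const,
    deriv_deriv_inv_sq hJ (hh_smooth.deriv_of_isOpen hJ (by norm_num)) hu hdh_ne,
    hderivF u hu, hF_eq u hu]
  have := hh_ne u hu
  field_simp
  ring
end

section
/- Let r, K, p > 0 with p ≥ 1 and d > 0, and let F(u) = (r/d)·(u²/2 - u^{p+2}/((p+2)·K^p)) be the potential of the Richards reaction term. Then the function u ↦ F(u)/(F'(u))² is convex on (0, K), i.e., its second derivative is nonnegative there (condition C2⁺ holds). -/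
/-!
With `t = (u / K) ^ p` one has `F / (F')² = a / (1 - t) + b / (1 - t)²` for constants `a, b ≥ 0`.
The outer function `v ↦ a / v + b / v²` is convex and antitone on `v > 0`, and `u ↦ 1 - (u / K) ^ p`
is concave for `p ≥ 1`, so the quotient is convex on `(0, K)`. A differentiable convex function has
a monotone derivative, which gives the nonnegative second derivative.
-/

open Set

section Composition

variable {𝕜 E α β : Type*} [Semiring 𝕜] [PartialOrder 𝕜] [AddCommMonoid E]
  [AddCommMonoid α] [PartialOrder α] [AddCommMonoid β] [PartialOrder β]
  [SMul 𝕜 E] [SMul 𝕜 α] [SMul 𝕜 β] {s : Set E} {t : Set β} {f : E → β} {g : β → α}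

theorem ConvexOn.comp_concaveOn_of_mapsTo (hg : ConvexOn 𝕜 t g) (hf : ConcaveOn 𝕜 s f)
    (hg' : AntitoneOn g t) (hst : MapsTo f s t) : ConvexOn 𝕜 s (g ∘ f) :=
  ⟨hf.1, fun _ hx _ hy _ _ ha hb hab =>
    (hg' (hg.1 (hst hx) (hst hy) ha hb hab) (hst (hf.1 hx hy ha hb hab))
      (hf.2 hx hy ha hb hab)).trans (hg.2 (hst hx) (hst hy) ha hb hab)⟩

end Composition

theorem ConvexOn.deriv_deriv_nonneg {S : Set ℝ} {φ : ℝ → ℝ} {x : ℝ} (hS : IsOpen S)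
    (hφ : ConvexOn ℝ S φ) (hφd : ∀ y ∈ S, DifferentiableAt ℝ φ y) (hx : x ∈ S) :
    0 ≤ deriv (deriv φ) x := by
  rw [← derivWithin_of_isOpen hS hx]
  exact (hφ.monotoneOn_deriv hφd).derivWithin_nonneg

theorem convexOn_inv_add_inv_sq {a b : ℝ} (ha : 0 ≤ a) (hb : 0 ≤ b) :
    ConvexOn ℝ (Ioi 0) fun v : ℝ => a * v⁻¹ + b * (v ^ 2)⁻¹ := by
  have h := ((convexOn_zpow (-1)).smul ha).add ((convexOn_zpow (-2)).smul hb)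
  refine h.congr fun v _ => ?_
  simp [zpow_neg]

theorem antitoneOn_inv_add_inv_sq {a b : ℝ} (ha : 0 ≤ a) (hb : 0 ≤ b) :
    AntitoneOn (fun v : ℝ => a * v⁻¹ + b * (v ^ 2)⁻¹) (Ioi 0) := by
  intro x (hx : 0 < x) y _ hxy
  dsimp only
  gcongr

theorem convexOn_div_rpow {K p : ℝ} (hK : 0 ≤ K) (hp : 1 ≤ p) :
    ConvexOn ℝ (Ici 0) fun u : ℝ => (u / K) ^ p := by
  refine ((convexOn_rpow hp).smul (inv_nonneg.2 (Real.rpow_nonneg hK p))).congr fun u hu => ?_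
  simp only [smul_eq_mul]
  rw [Real.div_rpow (mem_Ici.1 hu) hK, div_eq_inv_mul]

section RichardsRatio

variable {K p : ℝ}

theorem one_sub_div_rpow_pos (hK : 0 < K) (hp : 0 < p) {u : ℝ} (hu : u ∈ Ioo 0 K) :
    0 < 1 - (u / K) ^ p :=
  sub_pos.2 <| Real.rpow_lt_one (div_pos hu.1 hK).le ((div_lt_one hK).2 hu.2) hp

theorem convexOn_inv_one_sub_div_rpow (hK : 0 < K) (hp : 1 ≤ p) {a b : ℝ} (ha : 0 ≤ a)
    (hb : 0 ≤ b) :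
    ConvexOn ℝ (Ioo 0 K) fun u => a * (1 - (u / K) ^ p)⁻¹ + b * ((1 - (u / K) ^ p) ^ 2)⁻¹ := by
  have hconc : ConcaveOn ℝ (Ioo 0 K) fun u => 1 - (u / K) ^ p :=
    (concaveOn_const 1 (convex_Ioo 0 K)).sub ((convexOn_div_rpow hK.le hp).subset
      (Ioo_subset_Ioi_self.trans Ioi_subset_Ici_self) (convex_Ioo 0 K))
  exact (convexOn_inv_add_inv_sq ha hb).comp_concaveOn_of_mapsTo hconc
    (antitoneOn_inv_add_inv_sq ha hb) fun u hu => one_sub_div_rpow_pos hK (by linarith) hu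

theorem differentiableAt_inv_one_sub_div_rpow (hK : 0 < K) (hp : 0 < p) (a b : ℝ) {u : ℝ}
    (hu : u ∈ Ioo 0 K) :
    DifferentiableAt ℝ (fun u => a * (1 - (u / K) ^ p)⁻¹ + b * ((1 - (u / K) ^ p) ^ 2)⁻¹) u := by
  have h0 : u / K ≠ 0 := (div_pos hu.1 hK).ne'
  have h1 : 1 - (u / K) ^ p ≠ 0 := (one_sub_div_rpow_pos hK hp hu).ne'
  fun_prop (disch := simp [*])

theorem richards_ratio_eq {r d u : ℝ} (hr : r ≠ 0) (hK : 0 < K) (hp : p + 2 ≠ 0) (hd : d ≠ 0)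
    (hu : 0 < u) (ht : (u / K) ^ p ≠ 1) :
    (r / d) * (u ^ 2 / 2 - u ^ (p + 2) / ((p + 2) * K ^ p)) / (r * u * (1 - (u / K) ^ p) / d) ^ 2
      = d / (r * (p + 2)) * (1 - (u / K) ^ p)⁻¹
        + d * p / (2 * r * (p + 2)) * ((1 - (u / K) ^ p) ^ 2)⁻¹ := by
  have hKp : K ^ p ≠ 0 := (Real.rpow_pos_of_pos hK p).ne'
  have h1t : 1 - u ^ p / K ^ p ≠ 0 := by
    rw [← Real.div_rpow hu.le hK.le]
    exact sub_ne_zero.2 (Ne.symm ht)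
  rw [Real.div_rpow hu.le hK.le, Real.rpow_add hu, Real.rpow_two]
  field_simp
  ring

end RichardsRatio

theorem stmt_19 (r K p d : ℝ) (hr : 0 < r) (hK : 0 < K) (hp : 1 ≤ p) (hd : 0 < d)
    (f F : ℝ → ℝ)
    (hf : ∀ u, 0 ≤ u → f u = r * u * (1 - (u/K) ^ p))
    (hF : ∀ u, 0 ≤ u → F u = (r/d) * (u^2/2 - u ^ (p+2) / ((p+2) * K ^ p))) :
    ConvexOn ℝ (Set.Ioo 0 K) (fun u => F u / (f u / d)^2) ∧
    ∀ u ∈ Set.Ioo 0 K,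
      0 ≤ deriv (deriv (fun v => F v / (f v / d)^2)) u := by
  set G : ℝ → ℝ := fun u => d / (r * (p + 2)) * (1 - (u / K) ^ p)⁻¹
    + d * p / (2 * r * (p + 2)) * ((1 - (u / K) ^ p) ^ 2)⁻¹
  have hG : EqOn (fun u => F u / (f u / d) ^ 2) G (Ioo 0 K) := fun u hu => by
    simp only [G, hF u hu.1.le, hf u hu.1.le]
    exact richards_ratio_eq hr.ne' hK (by linarith) hd.ne' hu.1
      (sub_pos.1 (one_sub_div_rpow_pos hK (by linarith) hu)).ne
  have hconvex : ConvexOn ℝ (Ioo 0 K) (fun u => F u / (f u / d) ^ 2) :=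
    (convexOn_inv_one_sub_div_rpow hK hp (by positivity) (by positivity)).congr hG.symm
  refine ⟨hconvex, fun u hu => hconvex.deriv_deriv_nonneg isOpen_Ioo (fun y hy => ?_) hu⟩
  exact (differentiableAt_inv_one_sub_div_rpow hK (by linarith) _ _ hy).congr_of_eventuallyEq
    (Filter.eventuallyEq_of_mem (isOpen_Ioo.mem_nhds hy) hG)
end
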